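/- arXiv:2307.12456 — 2 statements merged into one kernel-verified Lean document; each statement's English description precedes it below -/
import Mathlib

section
/- With the Bayesian linear regression posterior covariance S_N = (α I + β Φᵀ Φ)⁻¹ and predictive variance σ²_N(x) = β⁻¹ + φ(x)ᵀ S_N φ(x), the difference in predictive variances upon removing the n-th training point satisfies σ²_{N\n}(x) - σ²_N(x) = (φ(x)ᵀ S_N φ(xₙ))² / (β⁻¹ - φ(xₙ)ᵀ S_N φ(xₙ)). -/
/-!
Deleting the `n`-th data point is the rank-one downdate `A ↦ A - β φ(xₙ) φ(xₙ)ᵀ` of the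
precision matrix `A = α I + β ΦᵀΦ`. By the Sherman–Morrison formula its inverse is `S_N` plus
`β / (1 - β φ(xₙ)ᵀ S_N φ(xₙ))` times `S_N φ(xₙ) φ(xₙ)ᵀ S_N`, and since `S_N` is symmetric the
quadratic form of that correction at `φ(x)` is `(φ(x)ᵀ S_N φ(xₙ))²`.
-/

namespace Matrix

variable {n K : Type*} [Fintype n] [Field K]

theorem dotProduct_vecMulVec_mulVec (x a b y : n → K) :
    x ⬝ᵥ vecMulVec a b *ᵥ y = (x ⬝ᵥ a) * (b ⬝ᵥ y) := by
  rw [vecMulVec_mulVec]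
  simp [dotProduct_smul, mul_comm]

variable [DecidableEq n]

theorem inv_sub_smul_vecMulVec {A : Matrix n n K} (hA : IsUnit A) (c : K) (u w : n → K)
    (h : 1 - c * (w ⬝ᵥ A⁻¹ *ᵥ u) ≠ 0) :
    (A - c • vecMulVec u w)⁻¹
      = A⁻¹ + (c / (1 - c * (w ⬝ᵥ A⁻¹ *ᵥ u))) • vecMulVec (A⁻¹ *ᵥ u) (w ᵥ* A⁻¹) := by
  refine inv_eq_right_inv ?_
  have hAA : A * A⁻¹ = 1 := mul_nonsing_inv A ((isUnit_iff_isUnit_det A).mp hA)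
  have hA_uw : A * vecMulVec (A⁻¹ *ᵥ u) (w ᵥ* A⁻¹) = vecMulVec u (w ᵥ* A⁻¹) := by
    rw [mul_vecMulVec, mulVec_mulVec, hAA, one_mulVec]
  have huw_uw : vecMulVec u w * vecMulVec (A⁻¹ *ᵥ u) (w ᵥ* A⁻¹)
      = (w ⬝ᵥ A⁻¹ *ᵥ u) • vecMulVec u (w ᵥ* A⁻¹) := by
    rw [vecMulVec_mul_vecMulVec, vecMulVec_smul]
  rw [sub_mul, mul_add, mul_add, hAA, Matrix.mul_smul, hA_uw, Matrix.smul_mul, Matrix.smul_mul,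
    Matrix.mul_smul, huw_uw, vecMulVec_mul]
  set t := w ⬝ᵥ A⁻¹ *ᵥ u
  set M := vecMulVec u (w ᵥ* A⁻¹)
  have hcoef : c / (1 - c * t) - c - c * (c / (1 - c * t) * t) = 0 := by
    field_simp; ring
  calc 1 + (c / (1 - c * t)) • M - (c • M + c • (c / (1 - c * t)) • t • M)
      = 1 + (c / (1 - c * t) - c - c * (c / (1 - c * t) * t)) • M := by module
    _ = 1 := by rw [hcoef, zero_smul, add_zero]

theorem dotProduct_inv_sub_smul_vecMulVec_self_mulVec {A : Matrix n n K} (hA : IsUnit A)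
    (hAT : Aᵀ = A) (c : K) (u x : n → K) (h : 1 - c * (u ⬝ᵥ A⁻¹ *ᵥ u) ≠ 0) :
    x ⬝ᵥ (A - c • vecMulVec u u)⁻¹ *ᵥ x
      = x ⬝ᵥ A⁻¹ *ᵥ x + c / (1 - c * (u ⬝ᵥ A⁻¹ *ᵥ u)) * (x ⬝ᵥ A⁻¹ *ᵥ u) ^ 2 := by
  have hsymm : u ᵥ* A⁻¹ ⬝ᵥ x = x ⬝ᵥ A⁻¹ *ᵥ u := by
    rw [← mulVec_transpose, transpose_nonsing_inv, hAT, dotProduct_comm]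
  rw [inv_sub_smul_vecMulVec hA c u u h, add_mulVec, dotProduct_add, smul_mulVec,
    dotProduct_smul, dotProduct_vecMulVec_mulVec, hsymm, smul_eq_mul, sq]

end Matrix

open Matrix

/-- Leave-one-out predictive variance difference in Bayesian linear regression:
`σ²_{N\n}(x) - σ²_N(x) = (φ(x)ᵀ S_N φ(xₙ))² / (β⁻¹ - φ(xₙ)ᵀ S_N φ(xₙ))`. -/
theorem predictive_variance_difference (N d : ℕ) (α β : ℝ) (hα : 0 < α) (hβ : 0 < β)
    (Φ : Matrix (Fin N) (Fin d) ℝ) (n : Fin N) (φx : Fin d → ℝ)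
    (SN : Matrix (Fin d) (Fin d) ℝ)
    (hSN : SN = (α • (1 : Matrix (Fin d) (Fin d) ℝ) + β • (Φᵀ * Φ))⁻¹)
    (SNn : Matrix (Fin d) (Fin d) ℝ)
    (hSNn : SNn = (α • (1 : Matrix (Fin d) (Fin d) ℝ) + β • (Φᵀ * Φ)
        - β • Matrix.vecMulVec (Φ n) (Φ n))⁻¹)
    (hω : 0 < β⁻¹ - (Φ n) ⬝ᵥ SN *ᵥ (Φ n)) :
    (β⁻¹ + φx ⬝ᵥ SNn *ᵥ φx) - (β⁻¹ + φx ⬝ᵥ SN *ᵥ φx)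
      = (φx ⬝ᵥ SN *ᵥ (Φ n)) ^ 2 / (β⁻¹ - (Φ n) ⬝ᵥ SN *ᵥ (Φ n)) := by
  set A := α • (1 : Matrix (Fin d) (Fin d) ℝ) + β • (Φᵀ * Φ)
  have hA : A.PosDef :=
    (PosDef.one.smul hα).add_posSemidef ((posSemidef_conjTranspose_mul_self Φ).smul hβ.le)
  have hden : 1 - β * (Φ n ⬝ᵥ SN *ᵥ Φ n) ≠ 0 := by
    rw [show 1 - β * (Φ n ⬝ᵥ SN *ᵥ Φ n) = β * (β⁻¹ - Φ n ⬝ᵥ SN *ᵥ Φ n) by field_simp]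
    positivity
  subst hSN hSNn
  rw [dotProduct_inv_sub_smul_vecMulVec_self_mulVec hA.isUnit hA.isHermitian.eq β (Φ n) φx hden]
  field_simp
  ring
end

section
/- Let W, Z₁,…,Z_N, Z be finite-valued random variables with joint law p(w) p(z|w) ∏_{n=1}^N p(zₙ|w), i.e., Z₁,…,Z_N, Z are conditionally i.i.d. given W. Then I(W; Z | Z^N) = (1/N) I(W; Z^N) - (1/N) Σ_{n=1}^N I(Z; Zₙ | Z^{N\n}) - (1/N) Σ_{n'=1}^{N-1} Σ_{n=n'}^{N-1} I(Z_{n+1}; Zₙ | Z^{n-1}), where Z^{N\n} denotes all training variables except Zₙ and Z^{n-1} = (Z₁,…,Z_{n-1}). -/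
open Finset

/-- Probability that a finite-valued random variable `X` on the finite
sample space `Ω` (with pmf `p`) takes the value `x`. -/
noncomputable def probOf {Ω α : Type*} [Fintype Ω] [DecidableEq α]
    (p : Ω → ℝ) (X : Ω → α) (x : α) : ℝ :=
  ∑ ω, if X ω = x then p ω else 0

/-- Shannon entropy (natural logarithm) of a finite-valued random variable. -/
noncomputable def entropy {Ω α : Type*} [Fintype Ω] [Fintype α] [DecidableEq α]
    (p : Ω → ℝ) (X : Ω → α) : ℝ :=
  -∑ x, probOf p X x * Real.log (probOf p X x)

/-- Conditional Shannon entropy `H(X | Y)`. -/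
noncomputable def condEntropy {Ω α β : Type*} [Fintype Ω] [Fintype α] [DecidableEq α]
    [Fintype β] [DecidableEq β] (p : Ω → ℝ) (X : Ω → α) (Y : Ω → β) : ℝ :=
  entropy p (fun ω => (X ω, Y ω)) - entropy p Y

/-- Mutual information `I(X; Y)`. -/
noncomputable def mutualInfo {Ω α β : Type*} [Fintype Ω] [Fintype α] [DecidableEq α]
    [Fintype β] [DecidableEq β] (p : Ω → ℝ) (X : Ω → α) (Y : Ω → β) : ℝ :=
  entropy p X + entropy p Y - entropy p (fun ω => (X ω, Y ω))

/-- Conditional mutual information `I(X; Y | Z)`. -/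
noncomputable def condMI {Ω α β γ : Type*} [Fintype Ω] [Fintype α] [DecidableEq α]
    [Fintype β] [DecidableEq β] [Fintype γ] [DecidableEq γ]
    (p : Ω → ℝ) (X : Ω → α) (Y : Ω → β) (Z : Ω → γ) : ℝ :=
  condEntropy p X Z + condEntropy p Y Z - condEntropy p (fun ω => (X ω, Y ω)) Z

/-- `p` is a probability mass function. -/
def IsPMF {Ω : Type*} [Fintype Ω] (p : Ω → ℝ) : Prop :=
  (∀ ω, 0 ≤ p ω) ∧ ∑ ω, p ω = 1

/-!
Write `A k` for the entropy of `k` of the observations `Z_i` (by conditional i.i.d.-ness it does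
not depend on which ones) and `c = H(Z | W)`. Marginalising the product law shows that for any
set `S` of `k` indices, `H(Z_S) = A k` and `H(W, Z_S) = H(W) + k c`. Every term of the identity
is therefore explicit: `I(W; Z | Z^N) = A (N+1) - A N - c`, `I(W; Z^N) = A N - N c`, and each
`I(Z_a; Z_b | Z_S)` with `|S| = k` equals the negative second difference
`2 A (k+1) - A (k+2) - A k`.
The double sum then collapses by summation by parts to `N A (N-1) - (N-1) A N`, and the identity
is linear algebra in `A (N-1)`, `A N`, `A (N+1)` and `c`.
-/

open Function

noncomputable def pmfEntropy {α : Type*} [Fintype α] (f : α → ℝ) : ℝ :=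
  ∑ x, Real.negMulLog (f x)

theorem Function.Injective.optionElim {β γ : Type*} {f : β → γ} (hf : Injective f) {a : γ}
    (ha : ∀ b, f b ≠ a) : Injective fun o : Option β => o.elim a f := by
  rintro (_ | x) (_ | y) h
  · rfl
  · exact absurd h.symm (ha y)
  · exact absurd h (ha x)
  · exact congrArg some (hf h)

section Entropy

variable {Ω α β : Type*} [Fintype Ω] [Fintype α] [Fintype β]

theorem entropy_eq_pmfEntropy [DecidableEq α] (p : Ω → ℝ) (X : Ω → α) :
    entropy p X = pmfEntropy (probOf p X) := by
  simp [entropy, pmfEntropy, Real.negMulLog]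

omit [Fintype β] in
theorem probOf_snd [DecidableEq α] [DecidableEq β] (p : Ω → ℝ) (X : Ω → α × β)
    (b : β) :
    probOf p (fun ω => (X ω).2) b = ∑ a, probOf p X (a, b) := by
  simp only [probOf]
  rw [Finset.sum_comm]
  refine Finset.sum_congr rfl fun ω _ => ?_
  simp [Prod.ext_iff, ite_and]

theorem entropy_comp_injective [DecidableEq α] [DecidableEq β] (p : Ω → ℝ) (X : Ω → α)
    {e : α → β} (he : Injective e) : entropy p (fun ω => e (X ω)) = entropy p X := by
  have hzero : ∀ b ∉ Set.range e, probOf p (fun ω => e (X ω)) b = 0 := fun b hb =>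
    Finset.sum_eq_zero fun ω _ => if_neg fun h => hb ⟨X ω, h⟩
  simp only [entropy_eq_pmfEntropy, pmfEntropy]
  refine (Fintype.sum_of_injective e he _ _ (fun b hb => by simp [hzero b hb]) fun a => ?_).symm
  simp only [probOf, he.eq_iff]

omit [Fintype Ω] in
theorem pmfEntropy_mul_kernel (f : α → ℝ) (g : α → β → ℝ)
    (hg : ∀ a, ∑ b, g a b = 1) :
    pmfEntropy (fun x : α × β => f x.1 * g x.1 x.2)
      = pmfEntropy f + ∑ a, f a * pmfEntropy (g a) := by
  simp only [pmfEntropy, Fintype.sum_prod_type, Real.negMulLog_mul, Finset.sum_add_distrib,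
    ← Finset.sum_mul, ← Finset.mul_sum, hg, one_mul]

omit [Fintype Ω] [Fintype β] in
theorem pmfEntropy_pi {f : α → ℝ} (hf : ∑ a, f a = 1) (k : ℕ) :
    pmfEntropy (fun z : Fin k → α => ∏ j, f (z j)) = k * pmfEntropy f := by
  induction k with
  | zero => simp [pmfEntropy]
  | succ k ih =>
    have hsum : ∑ z : Fin k → α, ∏ j, f (z j) = 1 := by
      rw [← Fintype.prod_sum]; simp [hf]
    have hstep := pmfEntropy_mul_kernel f (fun _ (z : Fin k → α) => ∏ j, f (z j)) fun _ => hsum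
    simp only [pmfEntropy] at hstep ih ⊢
    rw [← (Fin.consEquiv fun _ => α).sum_comp]
    simp only [Fin.consEquiv_apply, Fin.prod_univ_succ, Fin.cons_zero, Fin.cons_succ]
    rw [hstep, ih, ← Finset.sum_mul, hf]
    push_cast; ring

end Entropy

theorem sum_ite_comp_eq_prod {I J 𝓩 : Type*} [Fintype I] [DecidableEq I] [Fintype J]
    [Fintype 𝓩] [DecidableEq 𝓩] {ι : J → I} (hι : Injective ι) {f : I → 𝓩 → ℝ}
    (hf : ∀ i, ∑ ζ, f i ζ = 1) (z : J → 𝓩) :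
    ∑ ω : I → 𝓩, (if (fun j => ω (ι j)) = z then ∏ i, f i (ω i) else 0)
      = ∏ j, f (ι j) (z j) := by
  set δ : I → 𝓩 → ℝ := extend ι (fun j ζ => if ζ = z j then 1 else 0) 1 with hδ
  have hδ_off : ∀ i ∉ Set.range ι, δ i = 1 := fun i hi => extend_apply' _ _ _ hi
  have hind : ∀ ω : I → 𝓩, (if (fun j => ω (ι j)) = z then ∏ i, f i (ω i) else 0)
      = ∏ i, f i (ω i) * δ i (ω i) := by
    intro ω
    have : ∏ i, δ i (ω i) = ∏ j, if ω (ι j) = z j then 1 else 0 :=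
      (Fintype.prod_of_injective ι hι _ _ (fun i hi => by simp [hδ_off i hi])
        fun j => by simp [hδ, hι.extend_apply]).symm
    rw [Finset.prod_mul_distrib, this, Fintype.prod_boole]
    simp [funext_iff]
  rw [Fintype.sum_congr _ _ hind, ← Fintype.prod_sum fun i ζ => f i ζ * δ i ζ]
  refine (Fintype.prod_of_injective ι hι _ _ (fun i hi => by simp [hδ_off i hi, hf])
    fun j => by simp [hδ, hι.extend_apply]).symm

section CondIID

variable {𝓦 𝓩 : Type*} [Fintype 𝓦] [Fintype 𝓩]

noncomputable def jointLaw (π : 𝓦 → ℝ) (q : 𝓦 → 𝓩 → ℝ) (J : Type*) [Fintype J] :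
    𝓦 × (J → 𝓩) → ℝ :=
  fun x => π x.1 * ∏ j, q x.1 (x.2 j)

noncomputable def mixtureEntropy (π : 𝓦 → ℝ) (q : 𝓦 → 𝓩 → ℝ) (k : ℕ) : ℝ :=
  pmfEntropy fun z : Fin k → 𝓩 => ∑ w, jointLaw π q (Fin k) (w, z)

variable (π : 𝓦 → ℝ) {q : 𝓦 → 𝓩 → ℝ}

theorem mixtureEntropy_zero (hπ : ∑ w, π w = 1) : mixtureEntropy π q 0 = 0 := by
  simp [mixtureEntropy, jointLaw, pmfEntropy, hπ]

theorem pmfEntropy_jointLaw (hq : ∀ w, ∑ ζ, q w ζ = 1) (k : ℕ) :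
    pmfEntropy (jointLaw π q (Fin k)) = pmfEntropy π + k * ∑ w, π w * pmfEntropy (q w) := by
  have hsum : ∀ w, ∑ z : Fin k → 𝓩, ∏ j, q w (z j) = 1 := fun w => by
    rw [← Fintype.prod_sum fun _ => q w]; simp [hq w]
  refine (pmfEntropy_mul_kernel π (fun w (z : Fin k → 𝓩) => ∏ j, q w (z j)) hsum).trans ?_
  simp only [pmfEntropy_pi (hq _), Finset.mul_sum]
  congr 1
  exact Finset.sum_congr rfl fun w _ => by ring

variable [DecidableEq 𝓦] [DecidableEq 𝓩] (hq : ∀ w, ∑ ζ, q w ζ = 1)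
variable {I J : Type*} [Fintype I] [DecidableEq I] [Fintype J] [DecidableEq J]

include hq

omit [DecidableEq J] in
theorem probOf_jointLaw_restrict {ι : J → I} (hι : Injective ι) :
    probOf (jointLaw π q I) (fun ω => (ω.1, fun j => ω.2 (ι j))) = jointLaw π q J := by
  ext ⟨w, z⟩
  simp only [probOf, jointLaw, Fintype.sum_prod_type, Prod.mk.injEq, ite_and]
  rw [Fintype.sum_eq_single w fun w' hw' => by simp [hw'],
    ← sum_ite_comp_eq_prod hι (fun _ => hq w) z, Finset.mul_sum]
  simp only [if_pos, mul_ite, mul_zero]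

theorem entropy_restrict_fin {k : ℕ} {κ : Fin k → I} (hκ : Injective κ) :
    entropy (jointLaw π q I) (fun ω j => ω.2 (κ j)) = mixtureEntropy π q k := by
  rw [entropy_eq_pmfEntropy, mixtureEntropy, ← probOf_jointLaw_restrict π hq hκ]
  congr 1
  ext z
  exact probOf_snd _ (fun ω : 𝓦 × (I → 𝓩) => (ω.1, fun j => ω.2 (κ j))) z

theorem entropy_fst_restrict_fin {k : ℕ} {κ : Fin k → I} (hκ : Injective κ) :
    entropy (jointLaw π q I) (fun ω => (ω.1, fun j => ω.2 (κ j)))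
      = pmfEntropy π + k * ∑ w, π w * pmfEntropy (q w) := by
  rw [entropy_eq_pmfEntropy, probOf_jointLaw_restrict π hq hκ, pmfEntropy_jointLaw π hq]

theorem entropy_restrict {ι : J → I} (hι : Injective ι) :
    entropy (jointLaw π q I) (fun ω j => ω.2 (ι j)) = mixtureEntropy π q (Fintype.card J) := by
  let σ := (Fintype.equivFin J).symm
  rw [← entropy_restrict_fin π hq (hι.comp σ.injective)]
  exact (entropy_comp_injective _ (fun (ω : 𝓦 × (I → 𝓩)) j => ω.2 (ι j))
    σ.surjective.injective_comp_right).symm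

theorem entropy_fst_restrict {ι : J → I} (hι : Injective ι) :
    entropy (jointLaw π q I) (fun ω => (ω.1, fun j => ω.2 (ι j)))
      = pmfEntropy π + Fintype.card J * ∑ w, π w * pmfEntropy (q w) := by
  let σ := (Fintype.equivFin J).symm
  rw [← entropy_fst_restrict_fin π hq (hι.comp σ.injective)]
  exact (entropy_comp_injective _ (fun ω : 𝓦 × (I → 𝓩) => (ω.1, fun j => ω.2 (ι j)))
    (Injective.prodMap injective_id σ.surjective.injective_comp_right)).symm

theorem entropy_fst :
    entropy (jointLaw π q I) (fun ω => ω.1) = pmfEntropy π := by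
  have h := entropy_fst_restrict π hq (ι := (Empty.elim : Empty → I)) (fun a => a.elim)
  simp only [Fintype.card_empty, CharP.cast_eq_zero, zero_mul, add_zero] at h
  rw [← h]
  simpa using entropy_comp_injective _
    (fun ω : 𝓦 × (I → 𝓩) => (ω.1, fun j : Empty => ω.2 j.elim)) Prod.fst_injective

variable {a b : I} {ι : J → I}

theorem entropy_coord_restrict (hι : Injective ι) (ha : ∀ j, ι j ≠ a) :
    entropy (jointLaw π q I) (fun ω => (ω.2 a, fun j => ω.2 (ι j)))
      = mixtureEntropy π q (Fintype.card J + 1) := by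
  rw [← Fintype.card_option, ← entropy_restrict π hq (hι.optionElim ha)]
  simpa using entropy_comp_injective _ (fun (ω : 𝓦 × (I → 𝓩)) o => ω.2 (o.elim a ι))
    (Equiv.piOptionEquivProd (β := fun _ : Option J => 𝓩)).injective

theorem entropy_fst_coord_restrict (hι : Injective ι) (ha : ∀ j, ι j ≠ a) :
    entropy (jointLaw π q I) (fun ω => ((ω.1, ω.2 a), fun j => ω.2 (ι j)))
      = pmfEntropy π + (Fintype.card J + 1) * ∑ w, π w * pmfEntropy (q w) := by
  have h := entropy_fst_restrict π hq (hι.optionElim ha)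
  rw [Fintype.card_option, Nat.cast_succ] at h
  rw [← h]
  simpa using entropy_comp_injective _
    (fun ω : 𝓦 × (I → 𝓩) => (ω.1, fun o => ω.2 (o.elim a ι)))
    ((Equiv.prodAssoc _ _ _).symm.injective.comp
      (injective_id.prodMap (Equiv.piOptionEquivProd (β := fun _ : Option J => 𝓩)).injective))

theorem entropy_coord_coord_restrict (hι : Injective ι) (hab : b ≠ a) (ha : ∀ j, ι j ≠ a)
    (hb : ∀ j, ι j ≠ b) :
    entropy (jointLaw π q I) (fun ω => ((ω.2 a, ω.2 b), fun j => ω.2 (ι j)))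
      = mixtureEntropy π q (Fintype.card J + 2) := by
  have hκ : ∀ o : Option J, o.elim b ι ≠ a := by
    rintro (_ | j)
    exacts [hab, ha j]
  rw [show Fintype.card J + 2 = Fintype.card (Option J) + 1 by simp,
    ← entropy_coord_restrict π hq (hι.optionElim hb) hκ]
  simpa using entropy_comp_injective _
    (fun ω : 𝓦 × (I → 𝓩) => (ω.2 a, fun o => ω.2 (o.elim b ι)))
    ((Equiv.prodAssoc _ _ _).symm.injective.comp
      (injective_id.prodMap (Equiv.piOptionEquivProd (β := fun _ : Option J => 𝓩)).injective))

theorem mutualInfo_fst_restrict (hι : Injective ι) :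
    mutualInfo (jointLaw π q I) (fun ω => ω.1) (fun ω j => ω.2 (ι j))
      = mixtureEntropy π q (Fintype.card J) - Fintype.card J * ∑ w, π w * pmfEntropy (q w) := by
  rw [mutualInfo, entropy_fst π hq, entropy_restrict π hq hι, entropy_fst_restrict π hq hι]
  ring

theorem condMI_fst_coord_restrict (hι : Injective ι) (ha : ∀ j, ι j ≠ a) :
    condMI (jointLaw π q I) (fun ω => ω.1) (fun ω => ω.2 a) (fun ω j => ω.2 (ι j))
      = mixtureEntropy π q (Fintype.card J + 1) - mixtureEntropy π q (Fintype.card J)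
        - ∑ w, π w * pmfEntropy (q w) := by
  rw [condMI, condEntropy, condEntropy, condEntropy, entropy_fst_restrict π hq hι,
    entropy_coord_restrict π hq hι ha, entropy_fst_coord_restrict π hq hι ha,
    entropy_restrict π hq hι]
  ring

theorem condMI_coord_coord_restrict (hι : Injective ι) (hab : b ≠ a) (ha : ∀ j, ι j ≠ a)
    (hb : ∀ j, ι j ≠ b) :
    condMI (jointLaw π q I) (fun ω => ω.2 a) (fun ω => ω.2 b) (fun ω j => ω.2 (ι j))
      = 2 * mixtureEntropy π q (Fintype.card J + 1) - mixtureEntropy π q (Fintype.card J + 2)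
        - mixtureEntropy π q (Fintype.card J) := by
  rw [condMI, condEntropy, condEntropy, condEntropy, entropy_coord_restrict π hq hι ha,
    entropy_coord_restrict π hq hι hb, entropy_coord_coord_restrict π hq hι hab ha hb,
    entropy_restrict π hq hι]
  ring

theorem condMI_last_castSucc_compl {N : ℕ} (hN : 1 ≤ N) (n : Fin N) :
    condMI (jointLaw π q (Fin (N + 1))) (fun ωf => ωf.2 (Fin.last N))
        (fun ωf => ωf.2 n.castSucc)
        (fun ωf => fun i : {i : Fin N // i ≠ n} => ωf.2 i.val.castSucc)
      = 2 * mixtureEntropy π q N - mixtureEntropy π q (N + 1) - mixtureEntropy π q (N - 1) := by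
  have hcard : Fintype.card {i : Fin N // i ≠ n} = N - 1 := by simp [Fintype.card_subtype_compl]
  refine (condMI_coord_coord_restrict π hq (ι := fun i : {i : Fin N // i ≠ n} => i.val.castSucc)
    (fun i j h => Subtype.ext (Fin.castSucc_injective N h)) (Fin.castSucc_lt_last n).ne
    (fun i => (Fin.castSucc_lt_last _).ne) (fun i h => i.2 (Fin.castSucc_injective N h))).trans ?_
  rw [hcard, Nat.sub_add_cancel hN, show N - 1 + 2 = N + 1 by omega]

theorem condMI_succ_coord_prefix {N n : ℕ} (h1 : 1 ≤ n) (hn : n ≤ N) :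
    condMI (jointLaw π q (Fin (N + 1)))
        (fun ωf => ωf.2 ⟨n % (N + 1), Nat.mod_lt _ (Nat.succ_pos N)⟩)
        (fun ωf => ωf.2 ⟨(n - 1) % (N + 1), Nat.mod_lt _ (Nat.succ_pos N)⟩)
        (fun ωf => fun i : Fin (n - 1) =>
          ωf.2 ⟨i.val % (N + 1), Nat.mod_lt _ (Nat.succ_pos N)⟩)
      = 2 * mixtureEntropy π q n - mixtureEntropy π q (n + 1) - mixtureEntropy π q (n - 1) := by
  have hmod : ∀ m < N + 1, m % (N + 1) = m := fun m hm => Nat.mod_eq_of_lt hm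
  refine (condMI_coord_coord_restrict π hq (I := Fin (N + 1))
    (ι := fun i : Fin (n - 1) => ⟨i.val % (N + 1), Nat.mod_lt _ (Nat.succ_pos N)⟩)
    (fun i j h => Fin.ext ?_) ?_ (fun i => ?_) (fun i => ?_)).trans ?_
  · simp only [Fin.mk.injEq] at h
    rwa [hmod _ (by omega), hmod _ (by omega)] at h
  iterate 3
    simp only [ne_eq, Fin.mk.injEq]
    rw [hmod _ (by omega), hmod _ (by omega)]
    omega
  rw [Fintype.card_fin, Nat.sub_add_cancel h1, show n - 1 + 2 = n + 1 by omega]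

end CondIID

theorem sum_Icc_sum_Icc_eq_sum_mul (F : ℕ → ℝ) (M : ℕ) :
    ∑ n' ∈ Finset.Icc 1 M, ∑ n ∈ Finset.Icc n' M, F n
      = ∑ n ∈ Finset.Icc 1 M, (n : ℝ) * F n := by
  rw [Finset.sum_comm' (t' := Finset.Icc 1 M) (s' := fun n => Finset.Icc 1 n)
    (by intro x y; simp only [Finset.mem_Icc]; omega)]
  refine Finset.sum_congr rfl fun n _ => ?_
  rw [Finset.sum_const, Nat.card_Icc, nsmul_eq_mul, Nat.add_sub_cancel]

theorem sum_Icc_mul_second_difference (c : ℕ → ℝ) (M : ℕ) :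
    ∑ n ∈ Finset.Icc 1 M, (n : ℝ) * (2 * c n - c (n + 1) - c (n - 1))
      = (M + 1) * c M - M * c (M + 1) - c 0 := by
  induction M with
  | zero => simp
  | succ M ih =>
    rw [Finset.sum_Icc_succ_top (by omega), ih, Nat.add_sub_cancel]
    push_cast
    ring

/-- The sample space is `𝓦 × (Fin (N+1) → 𝓩)`; coordinate `Fin.last N` is the test point `Z` and
coordinate `i.castSucc` is the training point `Z_{i+1}`, so in the last sum coordinate `n` is
`Z_{n+1}`. -/
theorem cmi_decomposition {𝓦 𝓩 : Type*} [Fintype 𝓦] [DecidableEq 𝓦] [Fintype 𝓩] [DecidableEq 𝓩]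
    (N : ℕ) (hN : 1 ≤ N) (π : 𝓦 → ℝ) (q : 𝓦 → 𝓩 → ℝ)
    (hπ : IsPMF π) (hq : ∀ w, IsPMF (q w))
    (p : 𝓦 × (Fin (N + 1) → 𝓩) → ℝ)
    (hp : p = fun ωf => π ωf.1 * ∏ i, q ωf.1 (ωf.2 i)) :
    condMI p (fun ωf => ωf.1) (fun ωf => ωf.2 (Fin.last N))
        (fun ωf => fun i : Fin N => ωf.2 i.castSucc)
      = (1 / (N : ℝ)) * mutualInfo p (fun ωf => ωf.1) (fun ωf => fun i : Fin N => ωf.2 i.castSucc)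
        - (1 / (N : ℝ)) * ∑ n : Fin N,
            condMI p (fun ωf => ωf.2 (Fin.last N)) (fun ωf => ωf.2 n.castSucc)
              (fun ωf => fun i : {i : Fin N // i ≠ n} => ωf.2 i.val.castSucc)
        - (1 / (N : ℝ)) * ∑ n' ∈ Finset.Icc 1 (N - 1), ∑ n ∈ Finset.Icc n' (N - 1),
            condMI p (fun ωf => ωf.2 ⟨n % (N + 1), Nat.mod_lt _ (Nat.succ_pos N)⟩)
              (fun ωf => ωf.2 ⟨(n - 1) % (N + 1), Nat.mod_lt _ (Nat.succ_pos N)⟩)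
              (fun ωf => fun i : Fin (n - 1) => ωf.2 ⟨i.val % (N + 1), Nat.mod_lt _ (Nat.succ_pos N)⟩) := by
  have hq1 : ∀ w, ∑ ζ, q w ζ = 1 := fun w => (hq w).2
  replace hp : p = jointLaw π q (Fin (N + 1)) := hp
  subst hp
  have hlast : ∀ i : Fin N, i.castSucc ≠ Fin.last N := fun i => (Fin.castSucc_lt_last i).ne
  rw [condMI_fst_coord_restrict π hq1 (Fin.castSucc_injective N) hlast,
    mutualInfo_fst_restrict π hq1 (Fin.castSucc_injective N),
    Finset.sum_congr rfl fun n _ => condMI_last_castSucc_compl π hq1 hN n,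
    Finset.sum_congr rfl fun n' hn' => Finset.sum_congr rfl fun n hn =>
      condMI_succ_coord_prefix π hq1
        (by simp only [Finset.mem_Icc] at hn hn'; omega) (by simp only [Finset.mem_Icc] at hn; omega),
    sum_Icc_sum_Icc_eq_sum_mul, sum_Icc_mul_second_difference, Nat.sub_add_cancel hN,
    mixtureEntropy_zero π hπ.2]
  simp only [Finset.sum_const, Finset.card_univ, Fintype.card_fin, nsmul_eq_mul,
    Nat.cast_sub hN, Nat.cast_one]
  field_simp
  ring
end
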